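/- Fix b ∈ ℝ and ω > 0. Let y ∈ ℝ² with y ≠ 0 and t ≥ 0, and let η ∈ ℝ² be such that x^s(y,η) ≠ 0 for all s ∈ [0,t] (a condition that holds on a neighborhood of η). Then the action S(t,y,·), where S(t,y,η) := (1/2)∫₀ᵗ (|ξ^s|² − |A(x^s)|² − ω²|x^s|²) ds, is differentiable in η and its gradient satisfies ∇_η S(t,y,η) = (sin(ωt)/ω)·ξ^t(y,η), i.e., ∇_η S equals the transposed Jacobian of x^t in η applied to ξ^t. -/

import Mathlib

/-- The Aharonov–Bohm vector potential with flux `b`: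
`A(x) = (−b x₂/|x|², b x₁/|x|²)` for `x ∈ ℝ² \ {0}`. -/
noncomputable def A (b : ℝ) (x : ℝ × ℝ) : ℝ × ℝ :=
  (-b * x.2 / (x.1 ^ 2 + x.2 ^ 2), b * x.1 / (x.1 ^ 2 + x.2 ^ 2))

/-- The wedge product `u ∧ v = u₁v₂ − u₂v₁` on `ℝ²`. -/
def wedge (u v : ℝ × ℝ) : ℝ := u.1 * v.2 - u.2 * v.1

/-- The Euclidean inner product on `ℝ²`. -/
def dot (u v : ℝ × ℝ) : ℝ := u.1 * v.1 + u.2 * v.2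

/-- The squared Euclidean norm on `ℝ²`. -/
def normSq2 (u : ℝ × ℝ) : ℝ := u.1 ^ 2 + u.2 ^ 2

/-- The classical trajectory `x^t(y,η) = cos(ωt)·y + (sin(ωt)/ω)·(η − A(y))`. -/
noncomputable def traj (b ω : ℝ) (y η : ℝ × ℝ) (t : ℝ) : ℝ × ℝ :=
  Real.cos (ω * t) • y + (Real.sin (ω * t) / ω) • (η - A b y)

/-- The momentum `ξ^s(y,η) = (d/ds)x^s + A(x^s)`, defined when `x^s ≠ 0`. -/
noncomputable def xi (b ω : ℝ) (y η : ℝ × ℝ) (s : ℝ) : ℝ × ℝ :=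
  deriv (traj b ω y η) s + A b (traj b ω y η s)

/-- The action `S(t,y,η) = (1/2)∫₀ᵗ (|ξ^s|² − |A(x^s)|² − ω²|x^s|²) ds`. -/
noncomputable def action (b ω : ℝ) (y η : ℝ × ℝ) (t : ℝ) : ℝ :=
  (1 / 2) * ∫ s in (0 : ℝ)..t,
    (normSq2 (xi b ω y η s) - normSq2 (A b (traj b ω y η s))
      - ω ^ 2 * normSq2 (traj b ω y η s))

/-!
The integrand of the action is the Lagrangian `|v + A x|² - |A x|² - ω²|x|²` evaluated at
`(x^s, ẋ^s)`; it is smooth away from `x = 0`, so the action may be differentiated under the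
integral sign. Since `∂_η x^s = (sin ωs / ω) I`, `∂_η ẋ^s = cos ωs I`, `ẍ^s = -ω² x^s`, and the
Jacobian of `A` is symmetric (`A` is curl-free off the origin), the `η`-derivative of the
Lagrangian in the direction `w` is `2 d/ds [(sin ωs / ω) ⟨ξ^s, w⟩]`. Integrating, only the
boundary term at `s = t` survives.
-/

open Real

section ParametricIntegral

variable {E G : Type*} [NormedAddCommGroup E] [NormedSpace ℝ E]
  [NormedAddCommGroup G] [NormedSpace ℝ G] {F : E → ℝ → G} {U : Set (E × ℝ)}

lemma hasFDerivAt_of_contDiffOn_uncurry (hU : IsOpen U)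
    (hF : ContDiffOn ℝ 1 (Function.uncurry F) U) {u : E} {s : ℝ} (hp : (u, s) ∈ U) :
    HasFDerivAt (fun u => F u s)
      ((fderiv ℝ (Function.uncurry F) (u, s)).comp (ContinuousLinearMap.inl ℝ E ℝ)) u :=
  HasFDerivAt.comp (g := Function.uncurry F) u
    ((hF.differentiableOn one_ne_zero _ hp).differentiableAt (hU.mem_nhds hp)).hasFDerivAt
    (hasFDerivAt_prodMk_left (𝕜 := ℝ) u s)

lemma continuousOn_fderiv_of_contDiffOn_uncurry (hU : IsOpen U)
    (hF : ContDiffOn ℝ 1 (Function.uncurry F) U) :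
    ContinuousOn (fun p : E × ℝ => fderiv ℝ (fun u => F u p.2) p.1) U :=
  (((ContinuousLinearMap.compL ℝ E (E × ℝ) G).flip (ContinuousLinearMap.inl ℝ E ℝ)).continuous
      |>.comp_continuousOn (hF.continuousOn_fderiv_of_isOpen hU le_rfl)).congr
    fun _ hp => (hasFDerivAt_of_contDiffOn_uncurry hU hF hp).fderiv

lemma hasFDerivAt_intervalIntegral_of_contDiffOn (hU : IsOpen U)
    (hF : ContDiffOn ℝ 1 (Function.uncurry F) U) {η : E} {a b : ℝ}
    (hη : ∀ s ∈ Set.uIcc a b, (η, s) ∈ U) :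
    HasFDerivAt (fun u => ∫ s in a..b, F u s)
      (∫ s in a..b, fderiv ℝ (fun u => F u s) η) η := by
  set F' : E → ℝ → E →L[ℝ] G := fun u s => fderiv ℝ (fun u => F u s) u
  have hF'_cont : ContinuousOn (fun p : E × ℝ => F' p.1 p.2) U :=
    continuousOn_fderiv_of_contDiffOn_uncurry hU hF
  have hKU : {η} ×ˢ Set.uIcc a b ⊆ U := by
    rintro ⟨u, s⟩ ⟨rfl, hs⟩; exact hη s hs
  obtain ⟨C, hC⟩ := (isCompact_singleton.prod isCompact_uIcc).exists_bound_of_continuousOn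
    (hF'_cont.mono hKU)
  obtain ⟨W, V, hW, -, hηW, hV, hWV⟩ := generalized_tube_lemma isCompact_singleton
    isCompact_uIcc (hF'_cont.isOpen_inter_preimage hU (Metric.isOpen_ball (x := 0) (ε := C + 1)))
    (fun p hp => ⟨hKU hp, mem_ball_zero_iff.2 ((hC p hp).trans_lt (lt_add_one C))⟩)
  have hWU : ∀ u ∈ W, ∀ s ∈ Set.uIcc a b, (u, s) ∈ U ∧ ‖F' u s‖ < C + 1 := fun u hu s hs => by
    simpa using hWV ⟨hu, hV hs⟩
  have hFcont : ∀ u ∈ W, ContinuousOn (F u) (Set.uIcc a b) := fun u hu =>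
    (hF.continuousOn.comp (Continuous.continuousOn (by fun_prop))
      (fun s hs => (hWU u hu s hs).1) : ContinuousOn (fun s => Function.uncurry F (u, s)) _)
  have hηW : η ∈ W := hηW rfl
  exact hasFDerivAt_integral_of_dominated_of_fderiv_le'' (bound := fun _ => C + 1)
    (hW.mem_nhds hηW)
    (Filter.eventually_of_mem (hW.mem_nhds hηW) fun u hu =>
      ((hFcont u hu).mono Set.uIoc_subset_uIcc).aestronglyMeasurable measurableSet_uIoc)
    ((hFcont η hηW).intervalIntegrable)
    ((hF'_cont.comp (Continuous.continuousOn (by fun_prop))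
      (fun s hs => (hWU η hηW s (Set.uIoc_subset_uIcc hs)).1)).aestronglyMeasurable
        measurableSet_uIoc)
    ((MeasureTheory.ae_restrict_mem measurableSet_uIoc).mono fun s hs u hu =>
      (hWU u hu s (Set.uIoc_subset_uIcc hs)).2.le)
    intervalIntegrable_const
    ((MeasureTheory.ae_restrict_mem measurableSet_uIoc).mono fun s hs u hu =>
      (hasFDerivAt_of_contDiffOn_uncurry hU hF (hWU u hu s (Set.uIoc_subset_uIcc hs)).1)
        |>.differentiableAt.hasFDerivAt)

end ParametricIntegral

lemma HasDerivAt.prod_fst {f : ℝ → ℝ × ℝ} {f' : ℝ × ℝ} {τ : ℝ} (hf : HasDerivAt f f' τ) :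
    HasDerivAt (fun τ => (f τ).1) f'.1 τ :=
  hasFDerivAt_fst.comp_hasDerivAt (f := f) τ hf

lemma HasDerivAt.prod_snd {f : ℝ → ℝ × ℝ} {f' : ℝ × ℝ} {τ : ℝ} (hf : HasDerivAt f f' τ) :
    HasDerivAt (fun τ => (f τ).2) f'.2 τ :=
  hasFDerivAt_snd.comp_hasDerivAt (f := f) τ hf

lemma HasDerivAt.dot {f g : ℝ → ℝ × ℝ} {f' g' : ℝ × ℝ} {τ : ℝ} (hf : HasDerivAt f f' τ)
    (hg : HasDerivAt g g' τ) :
    HasDerivAt (fun τ => dot (f τ) (g τ)) (dot f' (g τ) + dot (f τ) g') τ := by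
  refine ((hf.prod_fst.mul hg.prod_fst).add (hf.prod_snd.mul hg.prod_snd)).congr_deriv ?_
  simp only [_root_.dot]; ring

lemma normSq2_eq_dot (u : ℝ × ℝ) : normSq2 u = dot u u := by
  simp only [normSq2, dot]; ring

lemma normSq2_ne_zero {x : ℝ × ℝ} (hx : x ≠ 0) : normSq2 x ≠ 0 := by
  contrapose! hx
  have h1 : x.1 ^ 2 = 0 ∧ x.2 ^ 2 = 0 :=
    (add_eq_zero_iff_of_nonneg (sq_nonneg _) (sq_nonneg _)).1 hx
  exact Prod.ext (pow_eq_zero_iff two_ne_zero |>.1 h1.1) (pow_eq_zero_iff two_ne_zero |>.1 h1.2)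

noncomputable def dA (b : ℝ) (x w : ℝ × ℝ) : ℝ × ℝ :=
  (-b * (w.2 * normSq2 x - 2 * x.2 * dot x w) / normSq2 x ^ 2,
    b * (w.1 * normSq2 x - 2 * x.1 * dot x w) / normSq2 x ^ 2)

-- The Aharonov–Bohm potential is curl-free away from the origin.
lemma dot_dA_comm (b : ℝ) (x v w : ℝ × ℝ) : dot (dA b x w) v = dot (dA b x v) w := by
  simp only [dA, dot, normSq2]; ring

lemma hasDerivAt_A_comp {X : ℝ → ℝ × ℝ} {X' : ℝ × ℝ} {τ : ℝ} (b : ℝ)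
    (hX : HasDerivAt X X' τ) (h0 : X τ ≠ 0) :
    HasDerivAt (fun τ => A b (X τ)) (dA b (X τ) X') τ := by
  have hN := normSq2_ne_zero h0
  have hX1 := hX.prod_fst
  have hX2 := hX.prod_snd
  have hD : HasDerivAt (fun τ => normSq2 (X τ)) (2 * dot (X τ) X') τ := by
    simp only [normSq2_eq_dot]
    exact (hX.dot hX).congr_deriv (by simp only [dot]; ring)
  refine (((hX2.const_mul (-b)).div hD hN).prodMk ((hX1.const_mul b).div hD hN)).congr_deriv ?_
  simp only [dA, dot, normSq2] at hN ⊢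
  ext
  · field_simp; ring
  · field_simp

lemma contDiffAt_A (b : ℝ) {x : ℝ × ℝ} (hx : x ≠ 0) {n : WithTop ℕ∞} :
    ContDiffAt ℝ n (A b) x := by
  have hN := normSq2_ne_zero hx
  unfold A
  have hD : ContDiffAt ℝ n (fun x : ℝ × ℝ => x.1 ^ 2 + x.2 ^ 2) x := by fun_prop
  exact ((contDiffAt_const.mul contDiffAt_snd).div hD hN).prodMk
    ((contDiffAt_const.mul contDiffAt_fst).div hD hN)

noncomputable def vel (b ω : ℝ) (y η : ℝ × ℝ) (s : ℝ) : ℝ × ℝ :=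
  (-(ω * sin (ω * s))) • y + cos (ω * s) • (η - A b y)

section Trajectory

variable {b ω : ℝ} (y η : ℝ × ℝ) (s : ℝ)

lemma hasDerivAt_sin_mul_div (hω : ω ≠ 0) :
    HasDerivAt (fun s => sin (ω * s) / ω) (cos (ω * s)) s := by
  have := (((hasDerivAt_id s).const_mul ω).sin).div_const ω
  field_simp at this
  simpa using this

lemma hasDerivAt_cos_mul : HasDerivAt (fun s => cos (ω * s)) (-(ω * sin (ω * s))) s := by
  have := ((hasDerivAt_id s).const_mul ω).cos
  simpa [mul_comm] using this

lemma hasDerivAt_traj (hω : ω ≠ 0) : HasDerivAt (traj b ω y η) (vel b ω y η s) s :=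
  ((hasDerivAt_cos_mul s).smul_const y).add ((hasDerivAt_sin_mul_div s hω).smul_const _)

lemma hasDerivAt_vel (hω : ω ≠ 0) :
    HasDerivAt (vel b ω y η) (-ω ^ 2 • traj b ω y η s) s := by
  have hsin : HasDerivAt (fun s => -(ω * sin (ω * s))) (-ω ^ 2 * cos (ω * s)) s := by
    have := (((hasDerivAt_id s).const_mul ω).sin.const_mul ω).neg
    exact this.congr_deriv (by simp only [id]; ring)
  refine ((hsin.smul_const y).add ((hasDerivAt_cos_mul s).smul_const (η - A b y))).congr_deriv ?_
  have : -ω ^ 2 * (sin (ω * s) / ω) = -(ω * sin (ω * s)) := by field_simp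
  simp only [traj, smul_add, smul_smul, this]

lemma xi_eq_vel_add (hω : ω ≠ 0) : xi b ω y η s = vel b ω y η s + A b (traj b ω y η s) := by
  rw [xi, (hasDerivAt_traj y η s hω).deriv]

lemma traj_add (w : ℝ × ℝ) :
    traj b ω y (η + w) s = traj b ω y η s + (sin (ω * s) / ω) • w := by
  simp only [traj, add_sub_right_comm, smul_add]; abel

lemma vel_add (w : ℝ × ℝ) : vel b ω y (η + w) s = vel b ω y η s + cos (ω * s) • w := by
  simp only [vel, add_sub_right_comm, smul_add]; abel

lemma continuous_traj : Continuous fun p : (ℝ × ℝ) × ℝ => traj b ω y p.1 p.2 := by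
  unfold traj; fun_prop

end Trajectory

noncomputable def lagrangian (b ω : ℝ) (x v : ℝ × ℝ) : ℝ :=
  normSq2 (v + A b x) - normSq2 (A b x) - ω ^ 2 * normSq2 x

noncomputable def trajLagrangian (b ω : ℝ) (y η : ℝ × ℝ) (s : ℝ) : ℝ :=
  lagrangian b ω (traj b ω y η s) (vel b ω y η s)

section Lagrangian

variable {b ω : ℝ}

lemma action_eq_integral_lagrangian (hω : ω ≠ 0) (y η : ℝ × ℝ) (t : ℝ) :
    action b ω y η t
      = 1 / 2 * ∫ s in (0 : ℝ)..t, trajLagrangian b ω y η s := by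
  simp only [action, trajLagrangian, lagrangian, xi_eq_vel_add _ _ _ hω]

lemma contDiffAt_lagrangian {n : WithTop ℕ∞} {q : (ℝ × ℝ) × (ℝ × ℝ)} (hq : q.1 ≠ 0) :
    ContDiffAt ℝ n (fun q : (ℝ × ℝ) × (ℝ × ℝ) => lagrangian b ω q.1 q.2) q := by
  have hA : ContDiffAt ℝ n (fun q : (ℝ × ℝ) × (ℝ × ℝ) => A b q.1) q :=
    (contDiffAt_A b hq).comp q contDiffAt_fst
  have hN : ContDiff ℝ n normSq2 := by unfold normSq2; fun_prop
  exact ((hN.contDiffAt.comp q (contDiffAt_snd.add hA)).sub (hN.contDiffAt.comp q hA)).sub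
    (contDiffAt_const.mul (hN.contDiffAt.comp q contDiffAt_fst))

lemma hasDerivAt_lagrangian_comp {X V : ℝ → ℝ × ℝ} {X' V' : ℝ × ℝ} {τ : ℝ}
    (hX : HasDerivAt X X' τ) (hV : HasDerivAt V V' τ) (h0 : X τ ≠ 0) :
    HasDerivAt (fun τ => lagrangian b ω (X τ) (V τ))
      (2 * dot (V τ + A b (X τ)) (V' + dA b (X τ) X')
        - 2 * dot (A b (X τ)) (dA b (X τ) X') - 2 * ω ^ 2 * dot (X τ) X') τ := by
  have hA := hasDerivAt_A_comp b hX h0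
  simp only [lagrangian, normSq2_eq_dot]
  refine ((((hV.add hA).dot (hV.add hA)).sub (hA.dot hA)).sub
    ((hX.dot hX).const_mul (ω ^ 2))).congr_deriv ?_
  simp only [dot, Pi.add_apply]; ring

variable (y : ℝ × ℝ)

lemma contDiffOn_lagrangian_traj :
    ContDiffOn ℝ 1 (Function.uncurry (trajLagrangian b ω y)) {p | traj b ω y p.1 p.2 ≠ 0} := by
  intro p hp
  have hcurve :
      ContDiffAt ℝ 1 (fun p : (ℝ × ℝ) × ℝ => (traj b ω y p.1 p.2, vel b ω y p.1 p.2)) p := by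
    unfold traj vel; fun_prop
  exact ((contDiffAt_lagrangian (q := (traj b ω y p.1 p.2, vel b ω y p.1 p.2)) hp).comp p
    hcurve).contDiffWithinAt

lemma fderiv_trajLagrangian_apply {η : ℝ × ℝ} {s : ℝ} (h0 : traj b ω y η s ≠ 0) (w : ℝ × ℝ) :
    fderiv ℝ (fun u => trajLagrangian b ω y u s) η w
      = 2 * cos (ω * s) * dot (vel b ω y η s + A b (traj b ω y η s)) w
        + 2 * (sin (ω * s) / ω) * (dot (vel b ω y η s) (dA b (traj b ω y η s) w)
          - ω ^ 2 * dot (traj b ω y η s) w) := by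
  have hd : DifferentiableAt ℝ (fun u => trajLagrangian b ω y u s) η := by
    unfold trajLagrangian
    have hcurve : ContDiffAt ℝ 1 (fun u => (traj b ω y u s, vel b ω y u s)) η := by
      unfold traj vel; fun_prop
    exact ((contDiffAt_lagrangian h0).comp η hcurve).differentiableAt one_ne_zero
  rw [← hd.lineDeriv_eq_fderiv]
  refine HasLineDerivAt.lineDeriv ?_
  have hline : ∀ c : ℝ, HasDerivAt (fun τ : ℝ => c • (τ • w)) (c • w) 0 := fun c =>
    ((hasDerivAt_id (0 : ℝ)).smul_const w).const_smul c |>.congr_deriv (by simp)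
  have H := hasDerivAt_lagrangian_comp (b := b) (ω := ω)
    ((hline (sin (ω * s) / ω)).const_add (traj b ω y η s))
    ((hline (cos (ω * s))).const_add (vel b ω y η s)) (by simpa using h0)
  simp only [HasLineDerivAt, trajLagrangian, traj_add, vel_add, smul_smul]
  simp only [smul_smul, zero_smul, smul_zero, add_zero] at H
  refine H.congr_deriv ?_
  simp only [dA, dot, Prod.smul_fst, Prod.smul_snd, Prod.fst_add, Prod.snd_add, smul_eq_mul]
  ring

end Lagrangian

lemma hasDerivAt_sin_div_mul_dot_momentum {b ω : ℝ} (hω : ω ≠ 0) (y η : ℝ × ℝ) {s : ℝ}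
    (h0 : traj b ω y η s ≠ 0) (w : ℝ × ℝ) :
    HasDerivAt (fun s => sin (ω * s) / ω * dot (vel b ω y η s + A b (traj b ω y η s)) w)
      (1 / 2 * fderiv ℝ (fun u => trajLagrangian b ω y u s) η w) s := by
  have hmomentum := (hasDerivAt_vel (b := b) y η s hω).add
    (hasDerivAt_A_comp b (hasDerivAt_traj y η s hω) h0)
  refine ((hasDerivAt_sin_mul_div s hω).mul (hmomentum.dot (hasDerivAt_const s w))).congr_deriv ?_
  have hsymm := dot_dA_comm b (traj b ω y η s) (vel b ω y η s) w
  rw [fderiv_trajLagrangian_apply y h0]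
  simp only [dot, Pi.add_apply, Prod.smul_fst, Prod.smul_snd, Prod.fst_add, Prod.snd_add,
    Prod.fst_zero, Prod.snd_zero, smul_eq_mul] at hsymm ⊢
  linear_combination (-(sin (ω * s) / ω)) * hsymm

theorem action_grad_eta_general (b ω : ℝ) (hω : 0 < ω)
    (y : ℝ × ℝ) (t : ℝ) (ht : 0 ≤ t) (η : ℝ × ℝ)
    (hne : ∀ s ∈ Set.Icc (0 : ℝ) t, traj b ω y η s ≠ 0) :
    ∃ L : ℝ × ℝ →L[ℝ] ℝ,
      HasFDerivAt (fun η' => action b ω y η' t) L η ∧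
      ∀ v : ℝ × ℝ, L v = (Real.sin (ω * t) / ω) * dot (xi b ω y η t) v := by
  have hω0 : ω ≠ 0 := hω.ne'
  have hU : IsOpen {p : (ℝ × ℝ) × ℝ | traj b ω y p.1 p.2 ≠ 0} :=
    isOpen_ne_fun (continuous_traj y) continuous_const
  have hη : ∀ s ∈ Set.uIcc 0 t, traj b ω y η s ≠ 0 := by rwa [Set.uIcc_of_le ht]
  have hcont :
      ContinuousOn (fun s => fderiv ℝ (fun u => trajLagrangian b ω y u s) η) (Set.uIcc 0 t) :=
    (continuousOn_fderiv_of_contDiffOn_uncurry hU (contDiffOn_lagrangian_traj y)).comp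
      (f := fun s => (η, s)) (Continuous.continuousOn (by fun_prop)) hη
  refine ⟨(1 / 2 : ℝ) • ∫ s in (0 : ℝ)..t, fderiv ℝ (fun u => trajLagrangian b ω y u s) η,
    ?_, fun w => ?_⟩
  · simp only [action_eq_integral_lagrangian hω0]
    exact (hasFDerivAt_intervalIntegral_of_contDiffOn hU (contDiffOn_lagrangian_traj y)
      hη).const_smul (1 / 2 : ℝ)
  · have hFTC := intervalIntegral.integral_eq_sub_of_hasDerivAt
      (fun s hs => hasDerivAt_sin_div_mul_dot_momentum hω0 y η (hη s hs) w)
      ((hcont.clm_apply continuousOn_const).const_smul (1 / 2 : ℝ)).intervalIntegrable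
    rw [smul_apply, ContinuousLinearMap.intervalIntegral_apply
      hcont.intervalIntegrable, smul_eq_mul, ← intervalIntegral.integral_const_mul, hFTC,
      xi_eq_vel_add y η t hω0]
    simp

/-- The gradient of the action in `η` is `(sin(ωt)/ω)·ξ^t(y,η)`, i.e. the
transposed Jacobian of `x^t` in `η` applied to `ξ^t`. -/
theorem action_grad_eta (b ω : ℝ) (hω : 0 < ω)
    (y : ℝ × ℝ) (hy : y ≠ 0) (t : ℝ) (ht : 0 ≤ t) (η : ℝ × ℝ)
    (hne : ∀ s ∈ Set.Icc (0 : ℝ) t, traj b ω y η s ≠ 0) :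
    ∃ L : ℝ × ℝ →L[ℝ] ℝ,
      HasFDerivAt (fun η' => action b ω y η' t) L η ∧
      ∀ v : ℝ × ℝ, L v = (Real.sin (ω * t) / ω) * dot (xi b ω y η t) v :=
  action_grad_eta_general b ω hω y t ht η hne
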